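/- Any secondary structure containing motif m₅ (a tree node of degree greater than four) or motif m₃∘ (a node with at least one unpaired child and degree greater than two) is not designable over {A,U,C,G} in the Watson-Crick model. -/

import Mathlib

open scoped Classical

/-- An RNA nucleotide. -/
inductive Base | A | U | C | G
deriving DecidableEq, Inhabited, Repr

/-- The Watson-Crick pairing relation (only G-C and A-U pairs allowed). -/
def wcPair : Base → Base → Prop
  | .G, .C => True | .C, .G => True
  | .A, .U => True | .U, .A => True
  | _, _ => False

/-- The Nussinov-Jacobson pairing relation (G-C, A-U and G-U pairs allowed). -/
def njPair : Base → Base → Prop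
  | .G, .C => True | .C, .G => True
  | .A, .U => True | .U, .A => True
  | .G, .U => True | .U, .G => True
  | _, _ => False

/-- An RNA (pseudoknot-free) secondary structure, 0-indexed positions. -/
structure SecStr where
  len : ℕ
  pairs : Finset (ℕ × ℕ)
  lt : ∀ p ∈ pairs, p.1 < p.2
  ub : ∀ p ∈ pairs, p.2 < len
  once : ∀ p ∈ pairs, ∀ q ∈ pairs, p ≠ q →
    p.1 ≠ q.1 ∧ p.1 ≠ q.2 ∧ p.2 ≠ q.1 ∧ p.2 ≠ q.2
  noncross : ∀ p ∈ pairs, ∀ q ∈ pairs,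
    ¬ (p.1 < q.1 ∧ q.1 < p.2 ∧ p.2 < q.2)

def SecStr.pairedAt (S : SecStr) (i : ℕ) : Prop := ∃ p ∈ S.pairs, p.1 = i ∨ p.2 = i
def SecStr.unpairedAt (S : SecStr) (i : ℕ) : Prop := i < S.len ∧ ¬ S.pairedAt i
def SecStr.saturated (S : SecStr) : Prop := ∀ i < S.len, S.pairedAt i

/-- A structure is compatible with a sequence `w` (w.r.t. pairing relation `R`)
if it has the right length and all base pairs are `R`-valid. -/
def compat {α : Type*} [Inhabited α] (R : α → α → Prop) (w : List α) (S : SecStr) : Prop :=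
  S.len = w.length ∧ ∀ p ∈ S.pairs, R (w.getD p.1 default) (w.getD p.2 default)

/-- Base-pair-sum free energy of a structure on a sequence. -/
noncomputable def energy {α : Type*} [Inhabited α] (E : α → α → ℝ) (w : List α)
    (S : SecStr) : ℝ :=
  ∑ p ∈ S.pairs, E (w.getD p.1 default) (w.getD p.2 default)

/-- `w` is a Δ-design for `S`: `S` is compatible with `w`, and every other
compatible structure has energy at least `energy E w S + Δ`. -/
def isDesign {α : Type*} [Inhabited α] (R : α → α → Prop) (E : α → α → ℝ) (Δ : ℝ)
    (w : List α) (S : SecStr) : Prop :=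
  compat R w S ∧ ∀ S' : SecStr, compat R w S' → S' ≠ S →
    energy E w S' ≥ energy E w S + Δ

/- Tree representation machinery. -/
def encloses (q p : ℕ × ℕ) : Prop := q.1 < p.1 ∧ p.2 < q.2
def SecStr.hasParent (S : SecStr) (p : ℕ × ℕ) : Prop := ∃ q ∈ S.pairs, encloses q p
def SecStr.isParentOf (S : SecStr) (q p : ℕ × ℕ) : Prop :=
  q ∈ S.pairs ∧ p ∈ S.pairs ∧ encloses q p ∧ ¬ ∃ m ∈ S.pairs, encloses q m ∧ encloses m p

/-- Degree of a paired node: number of paired children plus one for the parent (if any). -/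
noncomputable def SecStr.pairDeg (S : SecStr) (p : ℕ × ℕ) : ℕ :=
  (S.pairs.filter (fun c => S.isParentOf p c)).card + (if S.hasParent p then 1 else 0)
/-- Degree of the virtual root: number of top-level base pairs. -/
noncomputable def SecStr.rootDeg (S : SecStr) : ℕ :=
  (S.pairs.filter (fun p => ¬ S.hasParent p)).card
/-- All nodes of the tree representation (including the virtual root) have degree ≤ d. -/
def SecStr.degLE (S : SecStr) (d : ℕ) : Prop :=
  S.rootDeg ≤ d ∧ ∀ p ∈ S.pairs, S.pairDeg p ≤ d

/-- A sequence is saturable if a saturated structure is compatible with it. -/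
def saturable {α : Type*} [Inhabited α] (R : α → α → Prop) (w : List α) : Prop :=
  ∃ S : SecStr, compat R w S ∧ S.saturated
/-- Atomic saturable: saturable, and no (nonempty) proper prefix is saturable. -/
def atomicSaturable {α : Type*} [Inhabited α] (R : α → α → Prop) (w : List α) : Prop :=
  saturable R w ∧ ∀ k, 0 < k → k < w.length → ¬ saturable R (w.take k)

/- Motifs. -/
def SecStr.unpChildOfPair (S : SecStr) (q : ℕ × ℕ) (u : ℕ) : Prop :=
  S.unpairedAt u ∧ q.1 < u ∧ u < q.2 ∧
    ¬ ∃ m ∈ S.pairs, q.1 < m.1 ∧ m.1 < u ∧ u < m.2 ∧ m.2 < q.2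
def SecStr.unpChildOfRoot (S : SecStr) (u : ℕ) : Prop :=
  S.unpairedAt u ∧ ¬ ∃ m ∈ S.pairs, m.1 < u ∧ u < m.2
/-- Motif m₅ : a tree node (possibly the root) of degree greater than four. -/
def hasM5 (S : SecStr) : Prop := 4 < S.rootDeg ∨ ∃ p ∈ S.pairs, 4 < S.pairDeg p
/-- Motif m₃∘ : a node with an unpaired child and degree greater than two. -/
def hasM3o (S : SecStr) : Prop :=
  (∃ q ∈ S.pairs, (∃ u, S.unpChildOfPair q u) ∧ 2 < S.pairDeg q) ∨
  ((∃ u, S.unpChildOfRoot u) ∧ 2 < S.rootDeg)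

/- Colorings of the tree representation. -/
inductive Col | black | white | gray
deriving DecidableEq

noncomputable def childCount (S : SecStr) (col : ℕ × ℕ → Col) (q : ℕ × ℕ) (c : Col) : ℕ :=
  (S.pairs.filter (fun p => S.isParentOf q p ∧ col p = c)).card
noncomputable def rootChildCount (S : SecStr) (col : ℕ × ℕ → Col) (c : Col) : ℕ :=
  (S.pairs.filter (fun p => ¬ S.hasParent p ∧ col p = c)).card

/-- A proper coloring of the tree representation. -/
def properCol (S : SecStr) (col : ℕ × ℕ → Col) : Prop :=
  rootChildCount S col .black ≤ 1 ∧ rootChildCount S col .white ≤ 1 ∧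
  rootChildCount S col .gray ≤ 2 ∧
  ∀ q ∈ S.pairs,
    childCount S col q .black ≤ 1 ∧ childCount S col q .white ≤ 1 ∧
    childCount S col q .gray ≤ 2 ∧
    childCount S col q (col q) ≤ 1 ∧
    (col q = .black → ∀ p ∈ S.pairs, S.isParentOf q p → col p ≠ .white) ∧
    (col q = .white → ∀ p ∈ S.pairs, S.isParentOf q p → col p ≠ .black)

/-- Level of a paired node: #black minus #white on the path to the root (incl. itself). -/
noncomputable def pairLvl (S : SecStr) (col : ℕ × ℕ → Col) (p : ℕ × ℕ) : ℤ :=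
  ((S.pairs.filter (fun q => q.1 ≤ p.1 ∧ p.2 ≤ q.2 ∧ col q = .black)).card : ℤ) -
  ((S.pairs.filter (fun q => q.1 ≤ p.1 ∧ p.2 ≤ q.2 ∧ col q = .white)).card : ℤ)
/-- Level of an unpaired node. -/
noncomputable def unpLvl (S : SecStr) (col : ℕ × ℕ → Col) (u : ℕ) : ℤ :=
  ((S.pairs.filter (fun q => q.1 < u ∧ u < q.2 ∧ col q = .black)).card : ℤ) -
  ((S.pairs.filter (fun q => q.1 < u ∧ u < q.2 ∧ col q = .white)).card : ℤ)

/-- Separated coloring: gray-node levels and unpaired-node levels are disjoint. -/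
def separatedCol (S : SecStr) (col : ℕ × ℕ → Col) : Prop :=
  ∀ p ∈ S.pairs, col p = .gray → ∀ u, S.unpairedAt u →
    pairLvl S col p ≠ unpLvl S col u

/-- A bipartite energy model: its compatibility graph is bipartite. -/
def Bipartite {α : Type*} (R : α → α → Prop) : Prop :=
  ∃ f : α → Bool, ∀ a b, R a b → f a ≠ f b

/-- The k-stutter of a sequence. -/
def stutterSeq {α : Type*} (w : List α) (k : ℕ) : List α :=
  w.flatMap (fun a => List.replicate k a)
/-- The base pairs of the k-stutter of a structure. -/
def stutterPairs (S : SecStr) (k : ℕ) : Finset (ℕ × ℕ) :=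
  S.pairs.biUnion (fun p => (Finset.range k).image
    (fun m => (k * p.1 + m, k * p.2 + (k - 1 - m))))

/-- Two base pairs belong to the same band (maximal stack) of S. -/
def sameBand (S : SecStr) (p p' : ℕ × ℕ) : Prop :=
  p ∈ S.pairs ∧ p' ∈ S.pairs ∧ p.1 + p.2 = p'.1 + p'.2 ∧
  ∀ x, min p.1 p'.1 ≤ x → x ≤ max p.1 p'.1 → (x, p.1 + p.2 - x) ∈ S.pairs

/-- Nussinov-Jacobson energies: a for G-C, b for A-U, g for G-U. -/
def njE (a b g : ℝ) : Base → Base → ℝ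
  | .G, .C => a | .C, .G => a
  | .A, .U => b | .U, .A => b
  | .G, .U => g | .U, .G => g
  | _, _ => 0

/-- level of position i : #G minus #C in the prefix of w ending at i. -/
def lvl (w : List Base) (i : ℕ) : ℤ :=
  ((w.take (i+1)).count Base.G : ℤ) - ((w.take (i+1)).count Base.C : ℤ)


/-!
With energy `-1` per pair, a design has strictly more pairs than every other structure
compatible with its sequence. The positions of one loop of the tree (the ends of its closing
pair and of its children, and its unpaired bases) can be re-paired among themselves without
meeting any other pair. Orient the arcs of a loop along it; since Watson-Crick partners are
unique, the first letter of an arc determines both of its letters. Two arcs with the same first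
letter can be traded for two other pairs on their four ends, and an unpaired base `β` on the
loop can take over an arc end carrying the complement of `β`; neither move loses a pair. Hence
in a design a loop has at most four arcs, and at most two when it has an unpaired base `β`, since
then no arc starts with `β` or its complement.
-/

namespace Base

def compl : Base → Base
  | A => U | U => A | C => G | G => C

@[simp] lemma compl_compl (b : Base) : b.compl.compl = b := by cases b <;> rfl

lemma wcPair_compl_left (b : Base) : wcPair b.compl b := by cases b <;> trivial

lemma eq_compl_of_wcPair {a b : Base} (h : wcPair a b) : b = a.compl := by
  cases a <;> cases b <;> first | rfl | exact h.elim

lemma wcPair_symm {a b : Base} (h : wcPair a b) : wcPair b a := by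
  cases a <;> cases b <;> trivial

instance : Fintype Base :=
  ⟨{.A, .U, .C, .G}, fun b => by cases b <;> simp⟩

lemma card_univ : (Finset.univ : Finset Base).card = 4 := rfl

lemma card_compl_pair (b : Base) : ({b, b.compl}ᶜ : Finset Base).card = 2 := by
  cases b <;> rfl

end Base

structure ValidPairs (len : ℕ) (T : Finset (ℕ × ℕ)) : Prop where
  lt : ∀ p ∈ T, p.1 < p.2
  ub : ∀ p ∈ T, p.2 < len
  once : ∀ p ∈ T, ∀ q ∈ T, p ≠ q → p.1 ≠ q.1 ∧ p.1 ≠ q.2 ∧ p.2 ≠ q.1 ∧ p.2 ≠ q.2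
  noncross : ∀ p ∈ T, ∀ q ∈ T, ¬ (p.1 < q.1 ∧ q.1 < p.2 ∧ p.2 < q.2)

def ValidPairs.toSecStr {len : ℕ} {T : Finset (ℕ × ℕ)} (h : ValidPairs len T) : SecStr :=
  ⟨len, T, h.lt, h.ub, h.once, h.noncross⟩

lemma validPairs_singleton {len i j : ℕ} (hij : i < j) (hj : j < len) :
    ValidPairs len {(i, j)} := by
  constructor <;> simp only [Finset.mem_singleton, forall_eq, ne_eq, not_true_eq_false,
    false_implies] <;> omega

lemma validPairs_side_by_side {len a b c d : ℕ} (hab : a < b) (hbc : b < c) (hcd : c < d)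
    (hd : d < len) : ValidPairs len {(a, b), (c, d)} := by
  constructor <;>
    simp only [Finset.mem_insert, Finset.mem_singleton, forall_eq_or_imp, forall_eq, ne_eq,
      Prod.mk.injEq, not_true_eq_false, false_implies, true_and, and_true] <;>
    omega

lemma validPairs_nested {len a b c d : ℕ} (hab : a < b) (hbc : b < c) (hcd : c < d)
    (hd : d < len) : ValidPairs len {(a, d), (b, c)} := by
  constructor <;>
    simp only [Finset.mem_insert, Finset.mem_singleton, forall_eq_or_imp, forall_eq, ne_eq,
      Prod.mk.injEq, not_true_eq_false, false_implies, true_and, and_true] <;>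
    omega

namespace SecStr

variable (S : SecStr)

lemma ne_of_mem_sdiff {P : Finset (ℕ × ℕ)} (hP : P ⊆ S.pairs) {p : ℕ × ℕ} (hp : p ∈ P)
    {x : ℕ} (hx : x = p.1 ∨ x = p.2) : ∀ m ∈ S.pairs \ P, x ≠ m.1 ∧ x ≠ m.2 := by
  intro m hm
  rw [Finset.mem_sdiff] at hm
  have := S.once m hm.1 p (hP hp) (fun h => hm.2 (h ▸ hp))
  omega

lemma disjoint_or_encloses {p q : ℕ × ℕ} (hp : p ∈ S.pairs) (hq : q ∈ S.pairs) (hne : p ≠ q) :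
    p.2 < q.1 ∨ q.2 < p.1 ∨ encloses p q ∨ encloses q p := by
  have := S.noncross p hp q hq
  have := S.noncross q hq p hp
  have := S.once p hp q hq hne
  have := S.lt p hp
  have := S.lt q hq
  unfold encloses
  omega

lemma validPairs_rewire (P N : Finset (ℕ × ℕ)) (hN : ValidPairs S.len N)
    (hfree : ∀ n ∈ N, ∀ m ∈ S.pairs \ P, n.1 ≠ m.1 ∧ n.1 ≠ m.2 ∧ n.2 ≠ m.1 ∧ n.2 ≠ m.2)
    (hside : ∀ n ∈ N, ∀ m ∈ S.pairs \ P, (m.1 < n.1 ∧ n.1 < m.2 ↔ m.1 < n.2 ∧ n.2 < m.2)) :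
    ValidPairs S.len (N ∪ (S.pairs \ P)) where
  lt p hp := (Finset.mem_union.1 hp).elim (hN.lt p) fun h => S.lt p (Finset.mem_sdiff.1 h).1
  ub p hp := (Finset.mem_union.1 hp).elim (hN.ub p) fun h => S.ub p (Finset.mem_sdiff.1 h).1
  once p hp q hq hpq := by
    rcases Finset.mem_union.1 hp with hp | hp <;> rcases Finset.mem_union.1 hq with hq | hq
    · exact hN.once p hp q hq hpq
    · exact hfree p hp q hq
    · have := hfree q hq p hp
      omega
    · exact S.once p (Finset.mem_sdiff.1 hp).1 q (Finset.mem_sdiff.1 hq).1 hpq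
  noncross p hp q hq := by
    rcases Finset.mem_union.1 hp with hp | hp <;> rcases Finset.mem_union.1 hq with hq | hq
    · exact hN.noncross p hp q hq
    · have := hside p hp q hq
      have := hfree p hp q hq
      omega
    · have := hside q hq p hp
      have := hfree q hq p hp
      omega
    · exact S.noncross p (Finset.mem_sdiff.1 hp).1 q (Finset.mem_sdiff.1 hq).1

variable {S}

/-- `x` lies on the loop whose enclosing pairs are those satisfying `R`: apart from pairs ending
at `x`, a pair of `S` encloses `x` exactly when it satisfies `R`. -/
def InLoop (S : SecStr) (R : ℕ × ℕ → Prop) (x : ℕ) : Prop :=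
  ∀ m ∈ S.pairs, x ≠ m.1 → x ≠ m.2 → (m.1 < x ∧ x < m.2 ↔ R m)

lemma InLoop.inside_iff {R : ℕ × ℕ → Prop} {x y : ℕ} (hx : S.InLoop R x) (hy : S.InLoop R y)
    {m : ℕ × ℕ} (hm : m ∈ S.pairs) (hxm : x ≠ m.1 ∧ x ≠ m.2) (hym : y ≠ m.1 ∧ y ≠ m.2) :
    (m.1 < x ∧ x < m.2 ↔ m.1 < y ∧ y < m.2) :=
  (hx m hm hxm.1 hxm.2).trans (hy m hm hym.1 hym.2).symm

/-- The enclosing pairs of the loop closed by `q`: `q` itself and the pairs around it. -/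
def loopOf (q m : ℕ × ℕ) : Prop := m.1 ≤ q.1 ∧ q.2 ≤ m.2

lemma inLoop_closing {q : ℕ × ℕ} (hq : q ∈ S.pairs) :
    S.InLoop (loopOf q) q.1 ∧ S.InLoop (loopOf q) q.2 := by
  constructor <;> intro m hm h1 h2 <;>
  · have hmq : m ≠ q := by rintro rfl; omega
    have := S.disjoint_or_encloses hm hq hmq
    have := S.lt m hm
    have := S.lt q hq
    unfold loopOf encloses at *
    omega

lemma inLoop_child {q c : ℕ × ℕ} (hc : S.isParentOf q c) :
    S.InLoop (loopOf q) c.1 ∧ S.InLoop (loopOf q) c.2 := by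
  obtain ⟨hq, hcS, hqc, hmid⟩ := hc
  constructor <;> intro m hm h1 h2 <;>
  · have hmc : m ≠ c := by rintro rfl; omega
    have := S.disjoint_or_encloses hm hcS hmc
    have := S.lt m hm
    have := S.lt c hcS
    unfold loopOf encloses at *
    by_cases hmq : m = q
    · subst hmq; omega
    · have := S.disjoint_or_encloses hm hq hmq
      have : ¬ (q.1 < m.1 ∧ m.2 < q.2 ∧ m.1 < c.1 ∧ c.2 < m.2) :=
        fun h => hmid ⟨m, hm, ⟨h.1, h.2.1⟩, h.2.2⟩
      unfold encloses at *
      omega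

lemma inLoop_unpChildOfPair {q : ℕ × ℕ} (hq : q ∈ S.pairs) {u : ℕ} (hu : S.unpChildOfPair q u) :
    S.InLoop (loopOf q) u := by
  obtain ⟨-, hqu, huq, hmid⟩ := hu
  intro m hm h1 h2
  have := S.lt m hm
  unfold loopOf
  by_cases hmq : m = q
  · subst hmq; omega
  · have := S.disjoint_or_encloses hm hq hmq
    have : ¬ (q.1 < m.1 ∧ m.1 < u ∧ u < m.2 ∧ m.2 < q.2) := fun h => hmid ⟨m, hm, h⟩
    unfold encloses at *
    omega

lemma inLoop_top {r : ℕ × ℕ} (hr : r ∈ S.pairs) (htop : ¬ S.hasParent r) :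
    S.InLoop (fun _ => False) r.1 ∧ S.InLoop (fun _ => False) r.2 := by
  constructor <;> intro m hm h1 h2 <;>
  · have hmr : m ≠ r := by rintro rfl; omega
    have := S.disjoint_or_encloses hm hr hmr
    have : ¬ encloses m r := fun h => htop ⟨m, hm, h⟩
    have := S.lt m hm
    have := S.lt r hr
    unfold encloses at *
    simp only [iff_false]
    omega

lemma inLoop_unpChildOfRoot {u : ℕ} (hu : S.unpChildOfRoot u) :
    S.InLoop (fun _ => False) u :=
  fun m hm _ _ => iff_false_intro fun h => hu.2 ⟨m, hm, h⟩

/-- The arcs of the loop closed by `q`, each oriented along the loop; the closing pair is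
traversed from `q.2` to `q.1`. -/
noncomputable def arcs (S : SecStr) (q : ℕ × ℕ) : Finset (ℕ × ℕ) :=
  insert (q.2, q.1) (S.pairs.filter (fun c => S.isParentOf q c))

noncomputable def topPairs (S : SecStr) : Finset (ℕ × ℕ) :=
  S.pairs.filter (fun p => ¬ S.hasParent p)

lemma pairDeg_le_card_arcs {q : ℕ × ℕ} (hq : q ∈ S.pairs) : S.pairDeg q ≤ (S.arcs q).card := by
  have hnot : (q.2, q.1) ∉ S.pairs.filter (fun c => S.isParentOf q c) := fun h => by
    have := S.lt _ (Finset.mem_filter.1 h).1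
    have := S.lt q hq
    omega
  unfold pairDeg arcs
  rw [Finset.card_insert_of_notMem hnot]
  split_ifs <;> omega

lemma isParentOf.disjoint {q c c' : ℕ × ℕ} (hc : S.isParentOf q c) (hc' : S.isParentOf q c')
    (hne : c ≠ c') : c.2 < c'.1 ∨ c'.2 < c.1 := by
  rcases S.disjoint_or_encloses hc.2.1 hc'.2.1 hne with h | h | h | h
  · exact .inl h
  · exact .inr h
  · exact (hc'.2.2.2 ⟨c, hc.2.1, hc.2.2.1, h⟩).elim
  · exact (hc.2.2.2 ⟨c', hc'.2.1, hc'.2.2.1, h⟩).elim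

lemma disjoint_of_mem_topPairs {r r' : ℕ × ℕ} (hr : r ∈ S.topPairs) (hr' : r' ∈ S.topPairs)
    (hne : r ≠ r') : r.2 < r'.1 ∨ r'.2 < r.1 := by
  rw [topPairs, Finset.mem_filter] at hr hr'
  rcases S.disjoint_or_encloses hr.1 hr'.1 hne with h | h | h | h
  · exact .inl h
  · exact .inr h
  · exact (hr'.2 ⟨r, hr.1, h⟩).elim
  · exact (hr.2 ⟨r', hr'.1, h⟩).elim

end SecStr

section Design

variable {α : Type*} [Inhabited α] {R : α → α → Prop} {Δ : ℝ} {w : List α} {S : SecStr}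

lemma not_isDesign_of_card_le (hΔ : 0 < Δ) {S' : SecStr} (hS' : compat R w S') (hne : S' ≠ S)
    (hle : S.pairs.card ≤ S'.pairs.card) : ¬ isDesign R (fun _ _ => (-1 : ℝ)) Δ w S := by
  intro hdes
  have hE := hdes.2 S' hS' hne
  have hle' : (S.pairs.card : ℝ) ≤ S'.pairs.card := by exact_mod_cast hle
  simp only [energy, Finset.sum_const, nsmul_eq_mul, mul_neg, mul_one] at hE
  linarith

lemma not_isDesign_of_rewire (hΔ : 0 < Δ) (P N : Finset (ℕ × ℕ)) (hP : P ⊆ S.pairs)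
    (hN : ValidPairs S.len N) (hcard : P.card ≤ N.card) (hnew : ¬ N ⊆ S.pairs)
    (L : ℕ × ℕ → Prop)
    (hends : ∀ n ∈ N, ∀ x, x = n.1 ∨ x = n.2 →
      S.InLoop L x ∧ ∀ m ∈ S.pairs \ P, x ≠ m.1 ∧ x ≠ m.2)
    (hR : ∀ n ∈ N, R (w.getD n.1 default) (w.getD n.2 default)) :
    ¬ isDesign R (fun _ _ => (-1 : ℝ)) Δ w S := by
  intro hdes
  have hfree : ∀ n ∈ N, ∀ m ∈ S.pairs \ P, n.1 ≠ m.1 ∧ n.1 ≠ m.2 ∧ n.2 ≠ m.1 ∧ n.2 ≠ m.2 :=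
    fun n hn m hm => by
      have h₁ := (hends n hn n.1 (.inl rfl)).2 m hm
      have h₂ := (hends n hn n.2 (.inr rfl)).2 m hm
      exact ⟨h₁.1, h₁.2, h₂.1, h₂.2⟩
  have hside : ∀ n ∈ N, ∀ m ∈ S.pairs \ P,
      (m.1 < n.1 ∧ n.1 < m.2 ↔ m.1 < n.2 ∧ n.2 < m.2) := fun n hn m hm => by
    obtain ⟨hL₁, hf₁⟩ := hends n hn n.1 (.inl rfl)
    obtain ⟨hL₂, hf₂⟩ := hends n hn n.2 (.inr rfl)
    exact hL₁.inside_iff hL₂ (Finset.mem_sdiff.1 hm).1 (hf₁ m hm) (hf₂ m hm)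
  let S' := (S.validPairs_rewire P N hN hfree hside).toSecStr
  have hcompat : compat R w S' := by
    refine ⟨hdes.1.1, fun p hp => ?_⟩
    rcases Finset.mem_union.1 hp with hp | hp
    · exact hR p hp
    · exact hdes.1.2 p (Finset.mem_sdiff.1 hp).1
  have hne : S' ≠ S := fun h =>
    hnew fun n hn => h ▸ (Finset.mem_union_left _ hn : n ∈ S'.pairs)
  have hdisj : Disjoint N (S.pairs \ P) :=
    Finset.disjoint_left.2 fun n hn hn' => (hfree n hn n hn').1 rfl
  refine not_isDesign_of_card_le hΔ hcompat hne ?_ hdes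
  show S.pairs.card ≤ (N ∪ (S.pairs \ P)).card
  rw [Finset.card_union_of_disjoint hdisj, Finset.card_sdiff_of_subset hP]
  have := Finset.card_le_card hP
  omega

end Design

section WatsonCrick

open SecStr

variable {Δ : ℝ} {w : List Base} {S : SecStr} {L : ℕ × ℕ → Prop}

lemma getD_snd_eq_compl (hdes : isDesign wcPair (fun _ _ => (-1 : ℝ)) Δ w S) {p : ℕ × ℕ}
    (hp : p ∈ S.pairs) : w.getD p.2 default = (w.getD p.1 default).compl :=
  Base.eq_compl_of_wcPair (hdes.1.2 p hp)

lemma not_isDesign_of_swap_side_by_side (hΔ : 0 < Δ) {c c' : ℕ × ℕ} (hc : c ∈ S.pairs)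
    (hc' : c' ∈ S.pairs) (hcc' : c.2 < c'.1) (hL : S.InLoop L c.1 ∧ S.InLoop L c.2)
    (hL' : S.InLoop L c'.1 ∧ S.InLoop L c'.2)
    (hw : w.getD c.1 default = w.getD c'.1 default) :
    ¬ isDesign wcPair (fun _ _ => (-1 : ℝ)) Δ w S := by
  intro hdes
  have hlt := S.lt c hc
  have hlt' := S.lt c' hc'
  have hw₂ : w.getD c.2 default = w.getD c'.2 default := by
    rw [getD_snd_eq_compl hdes hc, getD_snd_eq_compl hdes hc', hw]
  have hP : {c, c'} ⊆ S.pairs := Finset.insert_subset hc (Finset.singleton_subset_iff.2 hc')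
  have hpos : ∀ x, (x = c.1 ∨ x = c.2) ∨ (x = c'.1 ∨ x = c'.2) →
      S.InLoop L x ∧ ∀ m ∈ S.pairs \ {c, c'}, x ≠ m.1 ∧ x ≠ m.2 := by
    rintro x (hx | hx)
    · exact ⟨by rcases hx with rfl | rfl; exacts [hL.1, hL.2], S.ne_of_mem_sdiff hP (by simp) hx⟩
    · exact ⟨by rcases hx with rfl | rfl; exacts [hL'.1, hL'.2], S.ne_of_mem_sdiff hP (by simp) hx⟩
  refine not_isDesign_of_rewire hΔ {c, c'} {(c.1, c'.2), (c.2, c'.1)}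
    hP (validPairs_nested hlt hcc' hlt' (S.ub c' hc')) ?_ ?_ L ?_ ?_ hdes
  · exact Finset.card_le_two.trans (Finset.card_pair fun h => by
      simp only [Prod.ext_iff] at h; omega).ge
  · intro hsub
    have hne : (c.1, c'.2) ≠ c := by simp only [ne_eq, Prod.ext_iff, not_and]; omega
    exact (S.once _ (hsub (by simp)) c hc hne).1 rfl
  · simp only [Finset.mem_insert, Finset.mem_singleton]
    rintro n (rfl | rfl) x hx <;> apply hpos <;> omega
  · simp only [Finset.mem_insert, Finset.mem_singleton]
    rintro n (rfl | rfl)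
    · rw [← hw₂]; exact hdes.1.2 c hc
    · rw [← hw]; exact Base.wcPair_symm (hdes.1.2 c hc)

-- `q` is read from `q.2` to `q.1`, the direction in which the loop it closes runs through it.
lemma not_isDesign_of_swap_nested (hΔ : 0 < Δ) {q c : ℕ × ℕ} (hq : q ∈ S.pairs)
    (hc : c ∈ S.pairs) (hqc : encloses q c) (hL : S.InLoop L q.1 ∧ S.InLoop L q.2)
    (hL' : S.InLoop L c.1 ∧ S.InLoop L c.2)
    (hw : w.getD q.2 default = w.getD c.1 default) :
    ¬ isDesign wcPair (fun _ _ => (-1 : ℝ)) Δ w S := by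
  intro hdes
  obtain ⟨hqc₁, hqc₂⟩ := hqc
  have hlt := S.lt c hc
  have hw₁ : w.getD q.1 default = w.getD c.2 default := by
    rw [getD_snd_eq_compl hdes hc, ← hw, getD_snd_eq_compl hdes hq, Base.compl_compl]
  have hP : {q, c} ⊆ S.pairs := Finset.insert_subset hq (Finset.singleton_subset_iff.2 hc)
  have hpos : ∀ x, (x = q.1 ∨ x = q.2) ∨ (x = c.1 ∨ x = c.2) →
      S.InLoop L x ∧ ∀ m ∈ S.pairs \ {q, c}, x ≠ m.1 ∧ x ≠ m.2 := by
    rintro x (hx | hx)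
    · exact ⟨by rcases hx with rfl | rfl; exacts [hL.1, hL.2], S.ne_of_mem_sdiff hP (by simp) hx⟩
    · exact ⟨by rcases hx with rfl | rfl; exacts [hL'.1, hL'.2], S.ne_of_mem_sdiff hP (by simp) hx⟩
  refine not_isDesign_of_rewire hΔ {q, c} {(q.1, c.1), (c.2, q.2)}
    hP (validPairs_side_by_side hqc₁ hlt hqc₂ (S.ub q hq)) ?_ ?_ L ?_ ?_ hdes
  · exact Finset.card_le_two.trans (Finset.card_pair fun h => by
      simp only [Prod.ext_iff] at h; omega).ge
  · intro hsub
    have hne : (q.1, c.1) ≠ q := by simp only [ne_eq, Prod.ext_iff, not_and]; omega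
    exact (S.once _ (hsub (by simp)) q hq hne).1 rfl
  · simp only [Finset.mem_insert, Finset.mem_singleton]
    rintro n (rfl | rfl) x hx <;> apply hpos <;> omega
  · simp only [Finset.mem_insert, Finset.mem_singleton]
    rintro n (rfl | rfl)
    · rw [hw₁]; exact Base.wcPair_symm (hdes.1.2 c hc)
    · rw [← hw₁]; exact hdes.1.2 q hq

lemma not_isDesign_of_steal (hΔ : 0 < Δ) {r : ℕ × ℕ} (hr : r ∈ S.pairs) {x u : ℕ}
    (hx : x = r.1 ∨ x = r.2) (hu : S.unpairedAt u) (hxL : S.InLoop L x) (huL : S.InLoop L u)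
    (hw : wcPair (w.getD x default) (w.getD u default)) :
    ¬ isDesign wcPair (fun _ _ => (-1 : ℝ)) Δ w S := by
  have hlt := S.lt r hr
  have hfree : ∀ y, y = x ∨ y = u →
      S.InLoop L y ∧ ∀ m ∈ S.pairs \ {r}, y ≠ m.1 ∧ y ≠ m.2 := by
    rintro y (rfl | rfl)
    · exact ⟨hxL, S.ne_of_mem_sdiff (by simpa using hr) (Finset.mem_singleton_self r) hx⟩
    · exact ⟨huL, fun m hm => ⟨fun h => hu.2 ⟨m, (Finset.mem_sdiff.1 hm).1, .inl h.symm⟩,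
        fun h => hu.2 ⟨m, (Finset.mem_sdiff.1 hm).1, .inr h.symm⟩⟩⟩
  have hnew : ∀ n : ℕ × ℕ, (n.1 = u ∨ n.2 = u) → ¬ {n} ⊆ S.pairs := fun n hn hsub =>
    hu.2 ⟨n, hsub (Finset.mem_singleton_self n), by omega⟩
  have hxu : x ≠ u := fun h => hu.2 ⟨r, hr, by omega⟩
  rcases hxu.lt_or_gt with hxu | hux
  · refine not_isDesign_of_rewire hΔ {r} {(x, u)} (by simpa using hr)
      (validPairs_singleton hxu hu.1) (by simp) (hnew _ (.inr rfl)) L ?_ (by simpa using hw)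
    simp only [Finset.mem_singleton]
    rintro n rfl y hy
    exact hfree y hy
  · refine not_isDesign_of_rewire hΔ {r} {(u, x)} (by simpa using hr)
      (validPairs_singleton hux (by have := S.ub r hr; omega)) (by simp) (hnew _ (.inl rfl)) L
      ?_ (by simpa using Base.wcPair_symm hw)
    simp only [Finset.mem_singleton]
    rintro n rfl y hy
    exact hfree y hy.symm


lemma injOn_arcs (hΔ : 0 < Δ) (hdes : isDesign wcPair (fun _ _ => (-1 : ℝ)) Δ w S)
    {q : ℕ × ℕ} (hq : q ∈ S.pairs) :
    Set.InjOn (fun a : ℕ × ℕ => w.getD a.1 default) (S.arcs q) := by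
  have hclosing : ∀ c, S.isParentOf q c → w.getD q.2 default ≠ w.getD c.1 default :=
    fun c hc hw => not_isDesign_of_swap_nested hΔ hq hc.2.1 hc.2.2.1 (inLoop_closing hq)
      (inLoop_child hc) hw hdes
  have hsiblings : ∀ c c', S.isParentOf q c → S.isParentOf q c' → c.2 < c'.1 →
      w.getD c.1 default ≠ w.getD c'.1 default :=
    fun c c' hc hc' hcc' hw => not_isDesign_of_swap_side_by_side hΔ hc.2.1 hc'.2.1 hcc'
      (inLoop_child hc) (inLoop_child hc') hw hdes
  intro a ha b hb hab
  simp only [arcs, Finset.coe_insert, Finset.coe_filter, Set.mem_insert_iff,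
    Set.mem_ofPred_eq] at ha hb
  rcases ha with rfl | ha <;> rcases hb with rfl | hb
  · rfl
  · exact (hclosing b hb.2 hab).elim
  · exact (hclosing a ha.2 hab.symm).elim
  · by_contra hne
    rcases ha.2.disjoint hb.2 hne with h | h
    exacts [hsiblings a b ha.2 hb.2 h hab, hsiblings b a hb.2 ha.2 h hab.symm]

lemma injOn_topPairs (hΔ : 0 < Δ) (hdes : isDesign wcPair (fun _ _ => (-1 : ℝ)) Δ w S) :
    Set.InjOn (fun a : ℕ × ℕ => w.getD a.1 default) S.topPairs := by
  have hsiblings : ∀ r r', r ∈ S.topPairs → r' ∈ S.topPairs → r.2 < r'.1 →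
      w.getD r.1 default ≠ w.getD r'.1 default := fun r r' hr hr' hrr' hw => by
    rw [topPairs, Finset.mem_filter] at hr hr'
    exact not_isDesign_of_swap_side_by_side hΔ hr.1 hr'.1 hrr' (inLoop_top hr.1 hr.2)
      (inLoop_top hr'.1 hr'.2) hw hdes
  intro r hr r' hr' hw
  by_contra hne
  rcases disjoint_of_mem_topPairs hr hr' hne with h | h
  exacts [hsiblings r r' hr hr' h hw, hsiblings r' r hr' hr h hw.symm]

lemma getD_mem_compl_of_unpaired (hΔ : 0 < Δ)
    (hdes : isDesign wcPair (fun _ _ => (-1 : ℝ)) Δ w S) {r : ℕ × ℕ}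
    (hr : r ∈ S.pairs) (hrL : S.InLoop L r.1 ∧ S.InLoop L r.2) {u : ℕ} (hu : S.unpairedAt u)
    (huL : S.InLoop L u) {x : ℕ} (hx : x = r.1 ∨ x = r.2) :
    w.getD x default ∈ ({w.getD u default, (w.getD u default).compl}ᶜ : Finset Base) := by
  have hsteal : ∀ y, y = r.1 ∨ y = r.2 → w.getD y default ≠ (w.getD u default).compl :=
    fun y hy hw => not_isDesign_of_steal hΔ hr hy hu
      (by rcases hy with rfl | rfl; exacts [hrL.1, hrL.2]) huL
      (hw ▸ Base.wcPair_compl_left _) hdes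
  have hr₂ := getD_snd_eq_compl hdes hr
  simp only [Finset.mem_compl, Finset.mem_insert, Finset.mem_singleton, not_or]
  refine ⟨fun hw => ?_, hsteal x hx⟩
  rcases hx with rfl | rfl
  · exact hsteal r.2 (.inr rfl) (by rw [hr₂, hw])
  · exact hsteal r.1 (.inl rfl) (by rw [← hw, hr₂, Base.compl_compl])


lemma pairDeg_le_four (hΔ : 0 < Δ) (hdes : isDesign wcPair (fun _ _ => (-1 : ℝ)) Δ w S)
    {q : ℕ × ℕ} (hq : q ∈ S.pairs) : S.pairDeg q ≤ 4 :=
  (pairDeg_le_card_arcs hq).trans <| Base.card_univ ▸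
    Finset.card_le_card_of_injOn _ (fun _ _ => Finset.mem_univ _) (injOn_arcs hΔ hdes hq)

lemma rootDeg_le_four (hΔ : 0 < Δ) (hdes : isDesign wcPair (fun _ _ => (-1 : ℝ)) Δ w S) :
    S.rootDeg ≤ 4 :=
  Base.card_univ ▸
    Finset.card_le_card_of_injOn _ (fun _ _ => Finset.mem_univ _) (injOn_topPairs hΔ hdes)

lemma pairDeg_le_two_of_unpChildOfPair (hΔ : 0 < Δ)
    (hdes : isDesign wcPair (fun _ _ => (-1 : ℝ)) Δ w S) {q : ℕ × ℕ} (hq : q ∈ S.pairs)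
    {u : ℕ} (hu : S.unpChildOfPair q u) : S.pairDeg q ≤ 2 := by
  refine (pairDeg_le_card_arcs hq).trans <| Base.card_compl_pair (w.getD u default) ▸
    Finset.card_le_card_of_injOn _ (fun a ha => ?_) (injOn_arcs hΔ hdes hq)
  have huL := inLoop_unpChildOfPair hq hu
  simp only [arcs, Finset.coe_insert, Finset.coe_filter, Set.mem_insert_iff,
    Set.mem_ofPred_eq] at ha
  rcases ha with rfl | ⟨-, hc⟩
  · exact getD_mem_compl_of_unpaired hΔ hdes hq (inLoop_closing hq) hu.1 huL (.inr rfl)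
  · exact getD_mem_compl_of_unpaired hΔ hdes hc.2.1 (inLoop_child hc) hu.1 huL (.inl rfl)

lemma rootDeg_le_two_of_unpChildOfRoot (hΔ : 0 < Δ)
    (hdes : isDesign wcPair (fun _ _ => (-1 : ℝ)) Δ w S) {u : ℕ} (hu : S.unpChildOfRoot u) :
    S.rootDeg ≤ 2 := by
  refine Base.card_compl_pair (w.getD u default) ▸
    Finset.card_le_card_of_injOn _ (fun r hr => ?_) (injOn_topPairs hΔ hdes)
  simp only [Finset.mem_coe, Finset.mem_filter] at hr
  exact getD_mem_compl_of_unpaired hΔ hdes hr.1 (inLoop_top hr.1 hr.2) hu.1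
    (inLoop_unpChildOfRoot hu) (.inl rfl)

end WatsonCrick

/-- any structure containing motif m₅ or motif m₃∘ is not
designable over {A,U,C,G} in the Watson-Crick model. -/
theorem stmt12 (S : SecStr) (h : hasM5 S ∨ hasM3o S) :
    ¬ ∃ w : List Base, isDesign wcPair (fun _ _ => (-1 : ℝ)) 1 w S := by
  rintro ⟨w, hdes⟩
  have hΔ : (0 : ℝ) < 1 := one_pos
  rcases h with (h | ⟨q, hq, h⟩) | (⟨q, hq, ⟨u, hu⟩, h⟩ | ⟨⟨u, hu⟩, h⟩)
  · exact h.not_ge (rootDeg_le_four hΔ hdes)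
  · exact h.not_ge (pairDeg_le_four hΔ hdes hq)
  · exact h.not_ge (pairDeg_le_two_of_unpChildOfPair hΔ hdes hq hu)
  · exact h.not_ge (rootDeg_le_two_of_unpChildOfRoot hΔ hdes hu)
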